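/- For every n ∈ ℕ there exists a constant Cₙ > 0 such that for every normed space X and all x, h ∈ X, sup over t ∈ [−1,1], t ≠ 0, of |(‖x + t·h‖^{2^n} + ‖x − t·h‖^{2^n} − 2‖x‖^{2^n})/t| ≤ Cₙ·(‖x‖^{2^n} + ‖h‖^{2^n}). -/

import Mathlib

/-!
Write `f = ‖·‖ ^ m` with `m = 2 ^ n`. Since `t ↦ ‖x + t • h‖` is `‖h‖`-Lipschitz, the mean value
bound `|a ^ m - c ^ m| ≤ m · max a c ^ (m - 1) · |a - c|` gives
`|f (x ± t • h) - f x| ≤ m (‖x‖ + ‖h‖) ^ m |t|` for `|t| ≤ 1`, and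
`(‖x‖ + ‖h‖) ^ m ≤ 2 ^ (m - 1) (‖x‖ ^ m + ‖h‖ ^ m)` by convexity.
Summing the two one-sided bounds yields the theorem with `C = m · 2 ^ m`.
-/

section

variable {E : Type*} [SeminormedAddCommGroup E]

lemma abs_norm_add_pow_sub_norm_pow_le (x v : E) (m : ℕ) :
    |‖x + v‖ ^ m - ‖x‖ ^ m| ≤ m * (‖x‖ + ‖v‖) ^ (m - 1) * ‖v‖ := by
  have hdiff : |‖x + v‖ - ‖x‖| ≤ ‖v‖ := by
    simpa using abs_norm_sub_norm_le (x + v) x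
  have hmax : max ‖x + v‖ ‖x‖ ≤ ‖x‖ + ‖v‖ :=
    max_le (norm_add_le x v) (le_add_of_nonneg_right (norm_nonneg v))
  calc |‖x + v‖ ^ m - ‖x‖ ^ m|
      ≤ |‖x + v‖ - ‖x‖| * m * max |‖x + v‖| |‖x‖| ^ (m - 1) := abs_pow_sub_pow_le ..
    _ ≤ ‖v‖ * m * (‖x‖ + ‖v‖) ^ (m - 1) := by
        rw [abs_norm, abs_norm]
        gcongr
    _ = m * (‖x‖ + ‖v‖) ^ (m - 1) * ‖v‖ := by ring

variable [NormedSpace ℝ E]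

lemma abs_norm_add_smul_pow_sub_norm_pow_le (x h : E) (m : ℕ) {t : ℝ} (ht : |t| ≤ 1) :
    |‖x + t • h‖ ^ m - ‖x‖ ^ m| ≤ m * (‖x‖ + ‖h‖) ^ m * |t| := by
  have hth : ‖t • h‖ = |t| * ‖h‖ := by rw [norm_smul, Real.norm_eq_abs]
  have hth_le : ‖t • h‖ ≤ ‖h‖ := by
    rw [hth]
    exact mul_le_of_le_one_left (norm_nonneg h) ht
  rcases Nat.eq_zero_or_pos m with rfl | hm
  · simp
  calc |‖x + t • h‖ ^ m - ‖x‖ ^ m|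
      ≤ m * (‖x‖ + ‖t • h‖) ^ (m - 1) * ‖t • h‖ := abs_norm_add_pow_sub_norm_pow_le x (t • h) m
    _ ≤ m * (‖x‖ + ‖h‖) ^ (m - 1) * (‖h‖ * |t|) := by
        gcongr
        exact (hth.trans (mul_comm _ _)).le
    _ ≤ m * (‖x‖ + ‖h‖) ^ (m - 1) * ((‖x‖ + ‖h‖) * |t|) := by
        gcongr
        exact le_add_of_nonneg_left (norm_nonneg x)
    _ = m * (‖x‖ + ‖h‖) ^ m * |t| := by
        rw [← mul_assoc, mul_assoc (m : ℝ), pow_sub_one_mul hm.ne']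

lemma abs_norm_pow_symm_second_diff_le (x h : E) (m : ℕ) {t : ℝ} (ht : |t| ≤ 1) :
    |‖x + t • h‖ ^ m + ‖x - t • h‖ ^ m - 2 * ‖x‖ ^ m|
      ≤ m * 2 ^ m * (‖x‖ ^ m + ‖h‖ ^ m) * |t| := by
  have hplus := abs_norm_add_smul_pow_sub_norm_pow_le x h m ht
  have hminus := abs_norm_add_smul_pow_sub_norm_pow_le x h m (t := -t) (by rwa [abs_neg])
  rw [neg_smul, ← sub_eq_add_neg, abs_neg] at hminus
  rcases Nat.eq_zero_or_pos m with rfl | hm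
  · norm_num
  calc |‖x + t • h‖ ^ m + ‖x - t • h‖ ^ m - 2 * ‖x‖ ^ m|
      = |(‖x + t • h‖ ^ m - ‖x‖ ^ m) + (‖x - t • h‖ ^ m - ‖x‖ ^ m)| := by congr 1; ring
    _ ≤ |‖x + t • h‖ ^ m - ‖x‖ ^ m| + |‖x - t • h‖ ^ m - ‖x‖ ^ m| := abs_add_le _ _
    _ ≤ 2 * m * (‖x‖ + ‖h‖) ^ m * |t| := by linarith
    _ ≤ 2 * m * (2 ^ (m - 1) * (‖x‖ ^ m + ‖h‖ ^ m)) * |t| := by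
        gcongr
        exact add_pow_le (norm_nonneg x) (norm_nonneg h) m
    _ = m * 2 ^ m * (‖x‖ ^ m + ‖h‖ ^ m) * |t| := by
        rw [← pow_sub_one_mul hm.ne' (2 : ℝ)]
        ring

end

theorem exists_const_bound_pow_symmetric_quotient.{u} (n : ℕ) :
    ∃ C : ℝ, 0 < C ∧
      ∀ (X : Type u) [NormedAddCommGroup X] [NormedSpace ℝ X], ∀ x h : X,
        ∀ t : ℝ, t ∈ Set.Icc (-1 : ℝ) 1 → t ≠ 0 →
          |(‖x + t • h‖ ^ (2 ^ n) + ‖x - t • h‖ ^ (2 ^ n) - 2 * ‖x‖ ^ (2 ^ n)) / t|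
            ≤ C * (‖x‖ ^ (2 ^ n) + ‖h‖ ^ (2 ^ n)) := by
  refine ⟨(2 ^ n : ℕ) * 2 ^ 2 ^ n, by positivity, fun X _ _ x h t ht ht0 => ?_⟩
  rw [abs_div, div_le_iff₀ (abs_pos.mpr ht0)]
  exact_mod_cast abs_norm_pow_symm_second_diff_le x h (2 ^ n) (abs_le.mpr ht)
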